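/- arXiv:0902.1950 — 2 statements merged into one kernel-verified Lean document; each statement's English description precedes it below -/
import Mathlib

section
/- Let U be a type and σ, π : Setoid U. Then partImp σ π = sInf {τ : Setoid U | ∀ a b, π.Rel a b → σ.Rel a b ∨ τ.Rel a b}. (Since the infimum of setoids is the intersection of their relations, which is the join of the corresponding partitions, this says σ ⇒ π is the most refined partition τ satisfying dit(τ) ∩ dit(σ) ⊆ dit(π), namely the join of all such partitions.) -/
/-- The partition implication `σ ⇒ π`: the setoid generated by the relation
`fun a b => π.r a b ∧ ¬ σ.r a b`. -/
def partImp {U : Type*} (σ π : Setoid U) : Setoid U :=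
  Relation.EqvGen.setoid (fun a b => π.r a b ∧ ¬ σ.r a b)

theorem partImp_le_iff {U : Type*} {σ π τ : Setoid U} :
    partImp σ π ≤ τ ↔ ∀ a b, π.r a b → σ.r a b ∨ τ.r a b := by
  constructor
  · intro h a b hπ
    by_cases hσ : σ.r a b
    · exact Or.inl hσ
    · exact Or.inr (h (Relation.EqvGen.rel a b ⟨hπ, hσ⟩))
  · intro h
    exact Setoid.eqvGen_le fun a b ⟨hπ, hσ⟩ => (h a b hπ).resolve_left hσ

/-- `σ ⇒ π` is the most refined partition `τ` with `dit(τ) ∩ dit(σ) ⊆ dit(π)`: as a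
setoid it is the infimum (= partition join) of all setoids `τ` such that every
`π`-indistinction is a `σ`-indistinction or a `τ`-indistinction. -/
theorem partImp_eq_sInf {U : Type*} (σ π : Setoid U) :
    partImp σ π = sInf {τ : Setoid U | ∀ a b, π.r a b → σ.r a b ∨ τ.r a b} := by
  simp only [← partImp_le_iff]
  exact isLeast_Ici.isGLB.sInf_eq.symm
end

section
/- Characterization of π-regular partitions and the Boolean core: let U be a type and π : Setoid U. Call a setoid τ : Setoid U π-regular if τ = partImp σ π for some setoid σ. Then: (1) τ is π-regular if and only if τ ≤ π as setoids and for all a, b, c, if τ.Rel a b with a ≠ b and π.Rel a c, then τ.Rel a c (i.e., τ is obtained from π by replacing some set of π-blocks by singletons, every non-singleton τ-class being a full π-class); and (2) the set of π-regular setoids, ordered by the reverse of the setoid order (the refinement order on partitions), is order-isomorphic to the powerset of the set of non-singleton π-equivalence classes ordered by inclusion. -/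
/-- A setoid `τ` is `π`-regular if it arises as a partition implication `σ ⇒ π`. -/
def IsPiRegular {U : Type*} (π τ : Setoid U) : Prop :=
  ∃ σ : Setoid U, τ = partImp σ π

/-!
The partition implication `σ ⇒ π` is `π` kept on the union `P` of the `π`-blocks that `σ`
splits and discrete elsewhere; conversely `π` kept on a `π`-saturated `P` is `σ ⇒ π` for `σ`
equal to `π` kept on the complement of `P`. Setoids of this shape are exactly those below `π`
whose non-singleton classes are full `π`-blocks, and such a setoid is determined by the set of
non-singleton `π`-blocks it discretizes, antitonically.
-/

namespace Setoid

variable {U : Type*} (π : Setoid U)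

def keepOn (P : U → Prop) : Setoid U where
  r a b := a = b ∨ (π a b ∧ P a ∧ P b)
  iseqv := by
    refine ⟨fun a => Or.inl rfl, ?_, ?_⟩
    · rintro a b (rfl | ⟨hab, ha, hb⟩)
      exacts [Or.inl rfl, Or.inr ⟨π.symm' hab, hb, ha⟩]
    · rintro a b c (rfl | ⟨hab, ha, hb⟩) hbc
      · exact hbc
      rcases hbc with rfl | ⟨hbc, -, hc⟩
      exacts [Or.inr ⟨hab, ha, hb⟩, Or.inr ⟨π.trans' hab hbc, ha, hc⟩]

variable {π}

theorem keepOn_le (P : U → Prop) : π.keepOn P ≤ π := by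
  rintro a b (rfl | ⟨hab, -⟩)
  exacts [π.refl' a, hab]

theorem keepOn_mono {P Q : U → Prop} (h : ∀ a, P a → Q a) : π.keepOn P ≤ π.keepOn Q := by
  rintro a b (rfl | ⟨hab, ha, hb⟩)
  exacts [Or.inl rfl, Or.inr ⟨hab, h a ha, h b hb⟩]

theorem keepOn_congr {P Q : U → Prop} (h : ∀ a b, π a b → a ≠ b → (P a ↔ Q a)) :
    π.keepOn P = π.keepOn Q := by
  ext a b
  exact or_congr_right' fun hne => and_congr_right fun hab =>
    and_congr (h a b hab hne) (h b a (π.symm' hab) (Ne.symm hne))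

theorem keepOn_rel_of_ne {P : U → Prop} (hP : ∀ a b, π a b → P a → P b) {a b c : U}
    (hab : π.keepOn P a b) (hne : a ≠ b) (hac : π a c) : π.keepOn P a c := by
  obtain ⟨-, ha, -⟩ := hab.resolve_left hne
  exact Or.inr ⟨hac, ha, hP a c hac ha⟩

def SplitsBlock (σ π : Setoid U) (a : U) : Prop := ∃ x, π a x ∧ ¬ σ a x

theorem SplitsBlock.of_rel {σ : Setoid U} {a b : U} (hab : π a b) (ha : SplitsBlock σ π a) :
    SplitsBlock σ π b := by
  obtain ⟨x, hax, hσ⟩ := ha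
  by_cases hσb : σ b a
  · exact ⟨x, π.trans' (π.symm' hab) hax, fun h => hσ (σ.trans' (σ.symm' hσb) h)⟩
  · exact ⟨a, π.symm' hab, hσb⟩

def NontrivialAt (τ : Setoid U) (a : U) : Prop := ∃ b, τ a b ∧ a ≠ b

theorem NontrivialAt.of_rel {τ : Setoid U} (hblock : ∀ a b c, τ a b → a ≠ b → π a c → τ a c)
    {a b : U} (hab : π a b) (hb : NontrivialAt τ b) : NontrivialAt τ a := by
  obtain ⟨x, hbx, hne⟩ := hb
  by_cases h : a = b
  · exact h ▸ ⟨x, hbx, hne⟩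
  · exact ⟨b, τ.symm' (hblock b x a hbx hne (π.symm' hab)), h⟩

theorem eq_keepOn_nontrivialAt {τ : Setoid U} (hle : τ ≤ π)
    (hblock : ∀ a b c, τ a b → a ≠ b → π a c → τ a c) : τ = π.keepOn (NontrivialAt τ) := by
  ext a b
  refine ⟨fun h => ?_, ?_⟩
  · by_cases hab : a = b
    · exact Or.inl hab
    · exact Or.inr ⟨hle h, ⟨b, h, hab⟩, ⟨a, τ.symm' h, Ne.symm hab⟩⟩
  · rintro (rfl | ⟨hab, ⟨x, hax, hne⟩, -⟩)
    exacts [τ.refl' a, hblock a x b hax hne hab]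

theorem rel_of_mem_classes {C : Set U} (hC : C ∈ π.classes) {a b : U} (ha : a ∈ C)
    (hb : b ∈ C) : π a b :=
  π.rel_iff_exists_classes.mpr ⟨C, hC, ha, hb⟩

theorem mem_of_rel_of_mem_classes {C : Set U} (hC : C ∈ π.classes) {a b : U} (hab : π a b)
    (hb : b ∈ C) : a ∈ C := by
  obtain ⟨y, rfl⟩ := hC
  exact π.trans' hab hb

variable (π) in
abbrev NontrivialClass : Type _ := {C : Set U // C ∈ π.classes ∧ ∃ x ∈ C, ∃ y ∈ C, x ≠ y}

def discretize (S : Set π.NontrivialClass) : Setoid U :=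
  π.keepOn fun a => ∀ C ∈ S, a ∉ C.1

variable (π) in
def splitClasses (τ : Setoid U) : Set π.NontrivialClass :=
  {C | ∃ a ∈ C.1, ∃ b ∈ C.1, ¬ τ a b}

theorem discretize_le_discretize {S T : Set π.NontrivialClass} (h : S ⊆ T) :
    discretize T ≤ discretize S :=
  keepOn_mono fun _ ha C hC => ha C (h hC)

theorem splitClasses_discretize (S : Set π.NontrivialClass) :
    splitClasses π (discretize S) = S := by
  ext C
  refine ⟨fun ⟨a, ha, b, hb, hsplit⟩ => ?_, fun hC => ?_⟩
  · by_contra hCS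
    refine hsplit (Or.inr ⟨rel_of_mem_classes C.2.1 ha hb, ?_, ?_⟩) <;>
    · intro C' hC' hmem
      exact hCS (Subtype.ext (eq_of_mem_classes C'.2.1 hmem C.2.1 ‹_›) ▸ hC')
  · obtain ⟨x, hx, y, hy, hne⟩ := C.2.2
    refine ⟨x, hx, y, hy, ?_⟩
    rintro (h | ⟨-, hxS, -⟩)
    exacts [hne h, hxS C hC hx]

end Setoid

section

open Setoid

variable {U : Type*} {π : Setoid U}

theorem partImp_eq_keepOn (σ π : Setoid U) : partImp σ π = π.keepOn (SplitsBlock σ π) := by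
  refine le_antisymm (eqvGen_le fun a b ⟨hab, hσ⟩ => ?_) ?_
  · exact Or.inr ⟨hab, ⟨b, hab, hσ⟩, SplitsBlock.of_rel hab ⟨b, hab, hσ⟩⟩
  · rintro a b (rfl | ⟨hab, ⟨x, hax, hσx⟩, -⟩)
    · exact (partImp σ π).refl' a
    by_cases hσ : σ a b
    -- when `σ` joins `a` and `b`, pass through the witness `x` that `σ` separates from both
    · exact Relation.EqvGen.trans _ x _ (.rel _ _ ⟨hax, hσx⟩)
        (.rel _ _ ⟨π.trans' (π.symm' hax) hab, fun h => hσx (σ.trans' hσ (σ.symm' h))⟩)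
    · exact .rel _ _ ⟨hab, hσ⟩

theorem partImp_keepOn_compl {P : U → Prop} (hP : ∀ a b, π a b → P a → P b) :
    partImp (π.keepOn fun a => ¬ P a) π = π.keepOn P := by
  rw [partImp_eq_keepOn]
  refine keepOn_congr fun a b hab hne => ⟨fun ⟨x, hax, hx⟩ => ?_, fun ha => ⟨b, hab, ?_⟩⟩
  · by_contra ha
    exact hx (Or.inr ⟨hax, ha, fun hxP => ha (hP x a (π.symm' hax) hxP)⟩)
  · rintro (h | ⟨-, hna, -⟩)
    exacts [hne h, hna ha]

theorem isPiRegular_iff_exists_keepOn {τ : Setoid U} :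
    IsPiRegular π τ ↔ ∃ P : U → Prop, (∀ a b, π a b → P a → P b) ∧ τ = π.keepOn P := by
  constructor
  · rintro ⟨σ, rfl⟩
    exact ⟨_, fun _ _ => SplitsBlock.of_rel, partImp_eq_keepOn σ π⟩
  · rintro ⟨P, hP, rfl⟩
    exact ⟨_, (partImp_keepOn_compl hP).symm⟩

theorem isPiRegular_iff {τ : Setoid U} :
    IsPiRegular π τ ↔ τ ≤ π ∧ ∀ a b c, τ a b → a ≠ b → π a c → τ a c := by
  rw [isPiRegular_iff_exists_keepOn]
  constructor
  · rintro ⟨P, hP, rfl⟩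
    exact ⟨keepOn_le P, fun _ _ _ => keepOn_rel_of_ne hP⟩
  · rintro ⟨hle, hblock⟩
    exact ⟨NontrivialAt τ, fun a b hab hb => NontrivialAt.of_rel hblock (π.symm' hab) hb,
      eq_keepOn_nontrivialAt hle hblock⟩

theorem isPiRegular_discretize (S : Set π.NontrivialClass) : IsPiRegular π (discretize S) :=
  isPiRegular_iff_exists_keepOn.mpr ⟨_, fun _ _ hab ha C hC hb =>
    ha C hC (mem_of_rel_of_mem_classes C.2.1 hab hb), rfl⟩

theorem discretize_splitClasses {τ : Setoid U} (hτ : IsPiRegular π τ) :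
    discretize (splitClasses π τ) = τ := by
  obtain ⟨hle, hblock⟩ := isPiRegular_iff.mp hτ
  have unsplit_iff : ∀ a b, π a b → a ≠ b →
      ((∀ C ∈ splitClasses π τ, a ∉ C.1) ↔ NontrivialAt τ a) := by
    refine fun a b hab hne => ⟨fun ha => ⟨b, ?_, hne⟩, fun ⟨x, hax, hx⟩ => ?_⟩
    · by_contra hτab
      exact ha ⟨_, π.mem_classes a, a, π.refl' a, b, π.symm' hab, hne⟩
        ⟨a, π.refl' a, b, π.symm' hab, hτab⟩ (π.refl' a)
    · rintro C ⟨u, hu, v, hv, huv⟩ haC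
      have hau := hblock a x u hax hx (rel_of_mem_classes C.2.1 haC hu)
      have hav := hblock a x v hax hx (rel_of_mem_classes C.2.1 haC hv)
      exact huv (τ.trans' (τ.symm' hau) hav)
  exact (keepOn_congr unsplit_iff).trans (eq_keepOn_nontrivialAt hle hblock).symm

theorem splitClasses_subset_splitClasses_iff {τ σ : Setoid U} (hτ : IsPiRegular π τ)
    (hσ : IsPiRegular π σ) : splitClasses π τ ⊆ splitClasses π σ ↔ σ ≤ τ := by
  refine ⟨fun h => ?_, fun h C ⟨a, ha, b, hb, hab⟩ => ⟨a, ha, b, hb, fun hσab => hab (h hσab)⟩⟩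
  rw [← discretize_splitClasses hτ, ← discretize_splitClasses hσ]
  exact discretize_le_discretize h

end

/-- **Characterization of `π`-regular partitions and the Boolean core.**
(1) `τ` is `π`-regular iff `τ ≤ π` as setoids and every non-singleton `τ`-class is a
full `π`-class (`τ` is `π` with some blocks discretized); and
(2) the `π`-regular setoids, in the refinement order (the reverse of the setoid order),
are order-isomorphic to the powerset of the set of non-singleton `π`-classes ordered by
inclusion. -/
theorem piRegular_characterization {U : Type*} (π : Setoid U) :
    (∀ τ : Setoid U, IsPiRegular π τ ↔
        (τ ≤ π ∧ ∀ a b c, τ.r a b → a ≠ b → π.r a c → τ.r a c)) ∧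
    Nonempty ((({τ : Setoid U // IsPiRegular π τ})ᵒᵈ) ≃o
        Set {C : Set U // C ∈ π.classes ∧ ∃ x ∈ C, ∃ y ∈ C, x ≠ y}) :=
  ⟨fun _ => isPiRegular_iff,
    ⟨{ toFun := fun τ => π.splitClasses (OrderDual.ofDual τ).1
       invFun := fun S => OrderDual.toDual ⟨Setoid.discretize S, isPiRegular_discretize S⟩
       left_inv := fun τ => Subtype.ext (discretize_splitClasses (OrderDual.ofDual τ).2)
       right_inv := Setoid.splitClasses_discretize
       map_rel_iff' := fun {τ σ} =>
         splitClasses_subset_splitClasses_iff (OrderDual.ofDual τ).2 (OrderDual.ofDual σ).2 }⟩⟩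
end
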